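/- arXiv:1712.04152 — 2 statements merged into one kernel-verified Lean document; each statement's English description precedes it below -/
import Mathlib

section
/- For every integer N ≥ 0 and real ε, the constraint polynomial satisfies P_N^{(N,ε)}(x,y) = det( y·I_N + x·D_N + C_N^{(N,ε)} ), where D_N = diag(1,2,…,N) and C_N^{(N,ε)} is the N×N tridiagonal matrix with diagonal entries (C)_{i,i} = −i(2(N−i) + 1 + 2ε) for i = 1,…,N, superdiagonal entries (C)_{i,i+1} = 1, and subdiagonal entries (C)_{i+1,i} = i(i+1)(N−i)(N−i+2ε), for i = 1,…,N−1. -/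
/-!
The pencil `y I + x D + C` is tridiagonal with unit superdiagonal, and so is the matrix `T` whose
continuant, the recurrence obtained by expanding its determinant along the last row, is the
defining recurrence of `P_k`. The two tridiagonal matrices differ, but they are intertwined,
`U (y I + x D + C) = T U`, by the lower unitriangular matrix
`U_{ac} = (-1)^(a-c) / (a-c)! * ∏_{c ≤ i < a} w_i` with `w_i = (i+1)(i+2)(N-i-1)`, whose
entries obey the first-order recurrences `w_a U_{ac} = (c-a-1) U_{a+1,c}` and
`w_c U_{a,c+1} = (c-a) U_{ac}`.
Hence both matrices have the same determinant.
-/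

/-- The constraint polynomials `P_k^{(N,ε)}(x,y)` of the asymmetric quantum Rabi model,
as real-valued functions, defined by the three-term recurrence. -/
def constraintPoly (N : ℕ) (ε x y : ℝ) : ℕ → ℝ
  | 0 => 1
  | 1 => x + y - 1 - 2 * ε
  | k + 2 =>
      (((k : ℝ) + 2) * x + y - ((k : ℝ) + 2) * (((k : ℝ) + 2) + 2 * ε)) *
          constraintPoly N ε x y (k + 1) -
        ((k : ℝ) + 2) * ((k : ℝ) + 1) * ((N : ℝ) - ((k : ℝ) + 1)) * x *
          constraintPoly N ε x y k

/-- The tridiagonal matrix `C_N^{(N,ε)}` (with `1`-based indices `i = (i₀ : Fin N) + 1`):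
diagonal entries `-i(2(N-i)+1+2ε)`, superdiagonal entries `1`, and subdiagonal entries
`(C)_{i+1,i} = i(i+1)(N-i)(N-i+2ε)`. -/
def Cmat (N : ℕ) (ε : ℝ) : Matrix (Fin N) (Fin N) ℝ :=
  Matrix.of fun i j =>
    if (i : ℕ) = (j : ℕ) then
      -(((i : ℕ) + 1 : ℝ) * (2 * ((N : ℝ) - ((i : ℕ) + 1)) + 1 + 2 * ε))
    else if (j : ℕ) = (i : ℕ) + 1 then 1
    else if (i : ℕ) = (j : ℕ) + 1 then
      ((j : ℕ) + 1 : ℝ) * ((j : ℕ) + 2 : ℝ) * ((N : ℝ) - ((j : ℕ) + 1)) *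
        ((N : ℝ) - ((j : ℕ) + 1) + 2 * ε)
    else 0

open Matrix Finset

lemma sum_range_ite_add_one_eq {M : Type*} [AddCommMonoid M] (F : ℕ → M) {n k : ℕ} (hk : k ≤ n) :
    (∑ b ∈ range n, if b + 1 = k then F b else 0) = if 0 < k then F (k - 1) else 0 := by
  cases k with
  | zero => simp
  | succ k => simp [Nat.lt_of_succ_le hk]

section Tridiagonal

variable {R : Type*} [CommRing R]

def tridiag (d u l : ℕ → R) (n : ℕ) : Matrix (Fin n) (Fin n) R :=
  of fun i j =>
    if (i : ℕ) = j then d i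
    else if (i : ℕ) + 1 = j then u i
    else if (i : ℕ) = j + 1 then l j
    else 0

def continuant (d u l : ℕ → R) : ℕ → R
  | 0 => 1
  | 1 => d 0
  | n + 2 => d (n + 1) * continuant d u l (n + 1) - u n * l n * continuant d u l n

variable (d u l : ℕ → R)

lemma transpose_tridiag (n : ℕ) : (tridiag d u l n)ᵀ = tridiag d l u n := by
  ext i j
  simp only [tridiag, transpose_apply, of_apply]
  split_ifs <;> grind

lemma tridiag_apply_eq_zero_below {n : ℕ} {i j : Fin n} (h : (j : ℕ) + 1 < i) :
    tridiag d u l n i j = 0 := by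
  simp only [tridiag, of_apply]
  split_ifs <;> first | rfl | omega

lemma tridiag_apply_eq_zero_above {n : ℕ} {i j : Fin n} (h : (i : ℕ) + 1 < j) :
    tridiag d u l n i j = 0 := by
  simp only [tridiag, of_apply]
  split_ifs <;> first | rfl | omega

lemma tridiag_submatrix_castSucc (n : ℕ) :
    (tridiag d u l (n + 1)).submatrix Fin.castSucc Fin.castSucc = tridiag d u l n := by
  ext i j
  simp [tridiag]

-- Deleting the last row and the second-to-last column leaves a matrix whose last column is
-- `u n • eₙ`, and whose remaining leading block is the tridiagonal matrix of size `n`.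
lemma det_tridiag_submatrix_castSucc_succAbove (n : ℕ) :
    ((tridiag d u l (n + 2)).submatrix Fin.castSucc (Fin.last n).castSucc.succAbove).det =
      u n * (tridiag d u l n).det := by
  rw [det_succ_column _ (Fin.last _), Fin.sum_univ_castSucc,
    sum_eq_zero fun i _ => by rw [submatrix_apply, Fin.succAbove_castSucc_self,
      Fin.succ_last, tridiag_apply_eq_zero_above d u l (by simp), mul_zero, zero_mul]]
  have hsub : ((tridiag d u l (n + 2)).submatrix Fin.castSucc
      (Fin.last n).castSucc.succAbove).submatrix (Fin.last n).succAbove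
      (Fin.last n).succAbove = tridiag d u l n := by
    ext i j
    simp [tridiag, Fin.succAbove_castSucc_of_lt _ _ (Fin.castSucc_lt_last j)]
  rw [hsub]
  simp [tridiag]

lemma det_tridiag : ∀ n, (tridiag d u l n).det = continuant d u l n
  | 0 => by simp [continuant]
  | 1 => by simp [continuant, tridiag]
  | n + 2 => by
    rw [det_succ_row _ (Fin.last _), Fin.sum_univ_castSucc, Fin.sum_univ_castSucc,
      sum_eq_zero fun j _ => by
        rw [tridiag_apply_eq_zero_below d u l (by simp), mul_zero, zero_mul],
      Fin.succAbove_last, det_tridiag_submatrix_castSucc_succAbove, tridiag_submatrix_castSucc,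
      det_tridiag n, det_tridiag (n + 1)]
    have hsubdiag : tridiag d u l (n + 2) (Fin.last _) (Fin.last n).castSucc = l n := by
      simp [tridiag, add_assoc]
    have hdiag : tridiag d u l (n + 2) (Fin.last _) (Fin.last _) = d (n + 1) := by simp [tridiag]
    have hodd : Odd (n + 1 + n) := ⟨n, by ring⟩
    have heven : Even (n + 1 + (n + 1)) := ⟨n + 1, rfl⟩
    rw [hsubdiag, hdiag, Fin.val_last, Fin.val_castSucc, Fin.val_last, hodd.neg_one_pow,
      heven.neg_one_pow, continuant]
    ring

lemma of_mul_tridiag_apply (w : ℕ → ℕ → R) {n : ℕ} (a c : Fin n) :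
    (of (fun i j : Fin n => w i j) * tridiag d u l n) a c =
      (if 0 < (c : ℕ) then w a (c - 1) * u (c - 1) else 0) + w a c * d c +
        (if (c : ℕ) + 1 < n then w a (c + 1) * l c else 0) := by
  let t : ℕ → R := fun b => (if b + 1 = c then w a b * u b else 0) +
    (if b = c then w a b * d b else 0) + (if b = c + 1 then w a b * l c else 0)
  have ht : ∀ b : Fin n, w a b * tridiag d u l n b c = t b := by
    intro b
    simp only [t, tridiag, of_apply]
    split_ifs <;> first | omega | simp
  simp only [mul_apply, of_apply, ht, Fin.sum_univ_eq_sum_range t n, t, sum_add_distrib,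
    sum_range_ite_add_one_eq _ c.isLt.le, sum_ite_eq', mem_range, c.isLt, if_true]

lemma tridiag_mul_of_apply (w : ℕ → ℕ → R) {n : ℕ} (a c : Fin n) :
    (tridiag d u l n * of (fun i j : Fin n => w i j)) a c =
      (if 0 < (a : ℕ) then w (a - 1) c * l (a - 1) else 0) + w a c * d a +
        (if (a : ℕ) + 1 < n then w (a + 1) c * u a else 0) := by
  rw [← transpose_apply (tridiag d u l n * _), transpose_mul, transpose_tridiag]
  exact of_mul_tridiag_apply d l u (fun i j => w j i) c a

end Tridiagonal

def subdiagWeight (N i : ℕ) : ℝ := (i + 1) * (i + 2) * (N - (i + 1))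

def pencilDiag (N : ℕ) (ε x y : ℝ) (i : ℕ) : ℝ :=
  y + (i + 1) * x - (i + 1) * (2 * (N - (i + 1)) + 1 + 2 * ε)

def pencilSubdiag (N : ℕ) (ε : ℝ) (i : ℕ) : ℝ := subdiagWeight N i * (N - (i + 1) + 2 * ε)

def recDiag (ε x y : ℝ) (i : ℕ) : ℝ := (i + 1) * x + y - (i + 1) * ((i + 1) + 2 * ε)

def recSubdiag (N : ℕ) (x : ℝ) (i : ℕ) : ℝ := subdiagWeight N i * x

lemma pencil_eq_tridiag (N : ℕ) (ε x y : ℝ) :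
    y • (1 : Matrix (Fin N) (Fin N) ℝ) +
        x • diagonal (fun i : Fin N => ((i : ℕ) + 1 : ℝ)) + Cmat N ε =
      tridiag (pencilDiag N ε x y) 1 (pencilSubdiag N ε) N := by
  ext i j
  simp only [Matrix.add_apply, Matrix.smul_apply, one_apply, diagonal_apply, Cmat, tridiag,
    of_apply, smul_eq_mul, Fin.ext_iff, pencilDiag, pencilSubdiag, subdiagWeight, Pi.one_apply]
  split_ifs <;> first | omega | ring

lemma constraintPoly_eq_continuant (N : ℕ) (ε x y : ℝ) :
    ∀ k, constraintPoly N ε x y k = continuant (recDiag ε x y) 1 (recSubdiag N x) k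
  | 0 => rfl
  | 1 => by simp only [constraintPoly, continuant, recDiag]; ring
  | k + 2 => by
    rw [constraintPoly, continuant, constraintPoly_eq_continuant N ε x y k,
      constraintPoly_eq_continuant N ε x y (k + 1)]
    simp only [recDiag, recSubdiag, subdiagWeight, Pi.one_apply]
    push_cast
    ring

noncomputable def intertwinerEntry (N a c : ℕ) : ℝ :=
  if c ≤ a then (-1) ^ (a - c) * (∏ i ∈ Ico c a, subdiagWeight N i) / (a - c).factorial else 0

lemma intertwinerEntry_self (N a : ℕ) : intertwinerEntry N a a = 1 := by
  simp [intertwinerEntry]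

lemma intertwinerEntry_of_lt (N : ℕ) {a c : ℕ} (h : a < c) : intertwinerEntry N a c = 0 := by
  simp [intertwinerEntry, not_le.2 h]

lemma subdiagWeight_mul_intertwinerEntry (N a c : ℕ) :
    subdiagWeight N a * intertwinerEntry N a c = (c - (a + 1)) * intertwinerEntry N (a + 1) c := by
  rcases lt_trichotomy c (a + 1) with hc | rfl | hc
  · obtain ⟨k, rfl⟩ : ∃ k, a = c + k := ⟨a - c, by omega⟩
    rw [intertwinerEntry, if_pos (by omega), intertwinerEntry, if_pos (by omega),
      show c + k + 1 - c = k + 1 by omega, Nat.add_sub_cancel_left,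
      prod_Ico_succ_top (by omega), Nat.factorial_succ, pow_succ]
    push_cast
    field_simp
    ring
  · simp [intertwinerEntry_of_lt N (Nat.lt_succ_self a)]
  · simp [intertwinerEntry_of_lt N hc, intertwinerEntry_of_lt N (a.lt_succ_self.trans hc)]

lemma subdiagWeight_mul_intertwinerEntry_succ (N a c : ℕ) :
    subdiagWeight N c * intertwinerEntry N a (c + 1) = (c - a) * intertwinerEntry N a c := by
  rcases lt_trichotomy c a with hc | rfl | hc
  · obtain ⟨k, rfl⟩ : ∃ k, a = c + k + 1 := ⟨a - c - 1, by omega⟩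
    rw [intertwinerEntry, if_pos (by omega), intertwinerEntry, if_pos (by omega),
      show c + k + 1 - (c + 1) = k by omega, show c + k + 1 - c = k + 1 by omega,
      prod_eq_prod_Ico_succ_bot (show c < c + k + 1 by omega), Nat.factorial_succ, pow_succ]
    push_cast
    field_simp
    ring
  · simp [intertwinerEntry_of_lt N (Nat.lt_succ_self c)]
  · simp [intertwinerEntry_of_lt N hc, intertwinerEntry_of_lt N (hc.trans c.lt_succ_self)]

lemma intertwinerEntry_top {N c : ℕ} (hc : c < N) : intertwinerEntry N N c = 0 := by
  obtain ⟨M, rfl⟩ : ∃ M, N = M + 1 := ⟨N - 1, by omega⟩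
  have h := subdiagWeight_mul_intertwinerEntry (M + 1) M c
  have hc' : (c : ℝ) - (M + 1) ≠ 0 := by
    have : (c : ℝ) < M + 1 := by exact_mod_cast hc
    linarith
  simp only [subdiagWeight, Nat.cast_add, Nat.cast_one, sub_self, mul_zero, zero_mul] at h
  exact (mul_eq_zero.1 h.symm).resolve_left hc'

lemma intertwinerEntry_pred_row (N a c : ℕ) :
    (if 0 < a then subdiagWeight N (a - 1) * intertwinerEntry N (a - 1) c else 0) =
      (c - a) * intertwinerEntry N a c := by
  cases a with
  | zero => cases c <;> simp [intertwinerEntry_of_lt]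
  | succ a => simpa using subdiagWeight_mul_intertwinerEntry N a c

lemma intertwinerEntry_pred_col (N a c : ℕ) :
    (c - 1 - a) * (if 0 < c then intertwinerEntry N a (c - 1) else 0) =
      c * (c + 1) * (N - c) * intertwinerEntry N a c := by
  cases c with
  | zero => simp
  | succ c =>
    have h := subdiagWeight_mul_intertwinerEntry_succ N a c
    simp only [subdiagWeight] at h
    simp only [Nat.lt_add_one_iff, zero_le, if_true, Nat.add_sub_cancel]
    push_cast
    linear_combination -h

lemma intertwinerEntry_intertwines (N : ℕ) (ε x y : ℝ) (a c : ℕ) :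
    (if 0 < c then intertwinerEntry N a (c - 1) else 0) +
        intertwinerEntry N a c * pencilDiag N ε x y c +
        intertwinerEntry N a (c + 1) * pencilSubdiag N ε c =
      (if 0 < a then intertwinerEntry N (a - 1) c * recSubdiag N x (a - 1) else 0) +
        intertwinerEntry N a c * recDiag ε x y a + intertwinerEntry N (a + 1) c := by
  have hleft : (if 0 < a then intertwinerEntry N (a - 1) c * recSubdiag N x (a - 1) else 0) =
      (c - a) * x * intertwinerEntry N a c := by
    rw [mul_right_comm, ← intertwinerEntry_pred_row]
    split_ifs
    · rw [recSubdiag]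
      ring
    · rw [zero_mul]
  have hsub : intertwinerEntry N a (c + 1) * pencilSubdiag N ε c =
      (c - a) * (N - (c + 1) + 2 * ε) * intertwinerEntry N a c := by
    rw [pencilSubdiag]
    linear_combination (N - (c + 1) + 2 * ε) * subdiagWeight_mul_intertwinerEntry_succ N a c
  rw [hleft, hsub]
  -- Off the superdiagonal, multiplying by `c - 1 - a` turns both sides into multiples of `U_{ac}`.
  by_cases hca : c = a + 1
  · subst hca
    simp [intertwinerEntry_self, intertwinerEntry_of_lt]
  · have hne : (c : ℝ) - 1 - a ≠ 0 := by
      intro h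
      apply hca
      exact_mod_cast (by linarith : (c : ℝ) = a + 1)
    refine mul_left_cancel₀ hne ?_
    have hstep := subdiagWeight_mul_intertwinerEntry N a c
    simp only [pencilDiag, recDiag, subdiagWeight] at hstep ⊢
    linear_combination intertwinerEntry_pred_col N a c + hstep

noncomputable def intertwiner (N : ℕ) : Matrix (Fin N) (Fin N) ℝ :=
  of fun a c => intertwinerEntry N a c

lemma det_intertwiner (N : ℕ) : (intertwiner N).det = 1 := by
  rw [det_of_isLowerTriangular (intertwiner N) fun a c hac => intertwinerEntry_of_lt N hac]
  exact prod_eq_one fun a _ => intertwinerEntry_self N a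

lemma intertwiner_mul_tridiag (N : ℕ) (ε x y : ℝ) :
    intertwiner N * tridiag (pencilDiag N ε x y) 1 (pencilSubdiag N ε) N =
      tridiag (recDiag ε x y) 1 (recSubdiag N x) N * intertwiner N := by
  ext a c
  rw [intertwiner, of_mul_tridiag_apply, tridiag_mul_of_apply]
  have hc : (if (c : ℕ) + 1 < N then intertwinerEntry N a (c + 1) * pencilSubdiag N ε c else 0) =
      intertwinerEntry N a (c + 1) * pencilSubdiag N ε c := by
    split_ifs with h
    · rfl
    · have hN : (N : ℝ) = c + 1 := by exact_mod_cast (by omega : N = c + 1)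
      simp [pencilSubdiag, subdiagWeight, hN]
  have ha : (if (a : ℕ) + 1 < N then intertwinerEntry N (a + 1) c * (1 : ℕ → ℝ) a else 0) =
      intertwinerEntry N (a + 1) c := by
    split_ifs with h
    · simp
    · rw [show (a : ℕ) + 1 = N by omega, intertwinerEntry_top c.isLt]
  rw [hc, ha, Pi.one_apply, mul_one]
  exact intertwinerEntry_intertwines N ε x y a c

/-- `P_N^{(N,ε)}(x,y) = det(y I_N + x D_N + C_N^{(N,ε)})` where
`D_N = diag(1,…,N)`. -/
theorem constraintPoly_eq_det (N : ℕ) (ε x y : ℝ) :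
    constraintPoly N ε x y N =
      (y • (1 : Matrix (Fin N) (Fin N) ℝ) +
        x • Matrix.diagonal (fun i : Fin N => ((i : ℕ) + 1 : ℝ)) + Cmat N ε).det := by
  have hdet := congrArg det (intertwiner_mul_tridiag N ε x y)
  rw [det_mul, det_mul, det_intertwiner, one_mul, mul_one] at hdet
  rw [pencil_eq_tridiag, hdet, det_tridiag, constraintPoly_eq_continuant]
end

section
/- Let N ≥ 0 be an integer and ε > −1/2 a real number. Then for every real y with y ≥ N(N + 2ε), the one-variable polynomial x ↦ P_N^{(N,ε)}(x, y) has no positive real roots, i.e., P_N^{(N,ε)}(x,y) ≠ 0 for all x > 0. -/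
lemma constraintPoly_aux (N : ℕ) (ε x y : ℝ) (hε : (-1 : ℝ) / 2 < ε)
    (hx : 0 < x) (hy : (N : ℝ) * ((N : ℝ) + 2 * ε) ≤ y) :
    ∀ k : ℕ, k + 2 ≤ N →
      0 < constraintPoly N ε x y k ∧
      ((k : ℝ) + 1) * ((N : ℝ) - (k : ℝ)) * constraintPoly N ε x y k ≤
        constraintPoly N ε x y (k + 1) := by
  intro k
  induction k with
  | zero =>
    intro hN
    have hN2 : (2 : ℝ) ≤ (N : ℝ) := by exact_mod_cast hN
    constructor
    · simp [constraintPoly]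
    · have e0 : constraintPoly N ε x y 0 = 1 := rfl
      have e1 : constraintPoly N ε x y (0 + 1) = x + y - 1 - 2 * ε := rfl
      rw [e0, e1]
      push_cast
      nlinarith [mul_nonneg (show (0:ℝ) ≤ (N:ℝ) - 1 by linarith)
        (show (0:ℝ) ≤ 2 * ε + 1 by linarith)]
  | succ k ih =>
    intro hN
    obtain ⟨hB, hstep⟩ := ih (by omega)
    have hkN : (k : ℝ) + 3 ≤ (N : ℝ) := by exact_mod_cast hN
    set A := constraintPoly N ε x y (k + 1) with hA
    set B := constraintPoly N ε x y k with hBdef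
    have hApos : 0 < A := by
      have h1 : (0 : ℝ) < ((k : ℝ) + 1) * ((N : ℝ) - (k : ℝ)) * B := by
        have : (0 : ℝ) < (N : ℝ) - (k : ℝ) := by linarith
        positivity
      linarith
    refine ⟨hApos, ?_⟩
    have hrec : constraintPoly N ε x y (k + 2) =
        (((k : ℝ) + 2) * x + y - ((k : ℝ) + 2) * (((k : ℝ) + 2) + 2 * ε)) * A -
          ((k : ℝ) + 2) * ((k : ℝ) + 1) * ((N : ℝ) - ((k : ℝ) + 1)) * x * B := rfl
    rw [hrec]
    have h1 : (0 : ℝ) ≤ (((k : ℝ) + 2) * x) * (A - ((k : ℝ) + 1) * ((N : ℝ) - (k : ℝ)) * B) := by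
      apply mul_nonneg (by positivity); linarith
    have h2 : (0 : ℝ) ≤ (((k : ℝ) + 2) * ((k : ℝ) + 1) * x) * B := by positivity
    have h3 : (0 : ℝ) ≤ (y - (N : ℝ) * ((N : ℝ) + 2 * ε)) * A := by
      apply mul_nonneg (by linarith) hApos.le
    have h4 : (0 : ℝ) ≤ (((N : ℝ) - (k : ℝ) - 2) * (1 + 2 * ε)) * A := by
      apply mul_nonneg (mul_nonneg (by linarith) (by linarith)) hApos.le
    have h5 : (0 : ℝ) ≤ ((N : ℝ) * ((N : ℝ) - (k : ℝ) - 3)) * A := by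
      apply mul_nonneg (mul_nonneg (by linarith) (by linarith)) hApos.le
    push_cast
    nlinarith [h1, h2, h3, h4, h5]

/-- for `ε > -1/2` and `y ≥ N(N+2ε)`, the polynomial
`x ↦ P_N^{(N,ε)}(x,y)` has no positive real roots. -/
theorem constraintPoly_no_positive_roots (N : ℕ) (ε : ℝ) (hε : (-1 : ℝ) / 2 < ε)
    (y : ℝ) (hy : (N : ℝ) * ((N : ℝ) + 2 * ε) ≤ y) :
    ∀ x : ℝ, 0 < x → constraintPoly N ε x y N ≠ 0 := by
  intro x hx
  match N, hy with
  | 0, hy => simp [constraintPoly]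
  | 1, hy =>
    show x + y - 1 - 2 * ε ≠ 0
    have : (1 : ℝ) * (1 + 2 * ε) ≤ y := by exact_mod_cast hy
    intro h; nlinarith
  | (m + 2), hy =>
    obtain ⟨hB, hstep⟩ := constraintPoly_aux (m + 2) ε x y hε hx hy m (by omega)
    set A := constraintPoly (m + 2) ε x y (m + 1) with hA
    set B := constraintPoly (m + 2) ε x y m with hBdef
    have hApos : 0 < A := by
      have h1 : (0 : ℝ) < ((m : ℝ) + 1) * (((m + 2 : ℕ) : ℝ) - (m : ℝ)) * B := by
        have : (0 : ℝ) < ((m + 2 : ℕ) : ℝ) - (m : ℝ) := by push_cast; linarith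
        positivity
      linarith
    have hrec : constraintPoly (m + 2) ε x y (m + 2) =
        (((m : ℝ) + 2) * x + y - ((m : ℝ) + 2) * (((m : ℝ) + 2) + 2 * ε)) * A -
          ((m : ℝ) + 2) * ((m : ℝ) + 1) * (((m + 2 : ℕ) : ℝ) - ((m : ℝ) + 1)) * x * B := rfl
    have hy' : ((m : ℝ) + 2) * (((m : ℝ) + 2) + 2 * ε) ≤ y := by push_cast at hy; linarith
    have hstep' : ((m : ℝ) + 1) * 2 * B ≤ A := by
      have : (((m + 2 : ℕ) : ℝ) - (m : ℝ)) = 2 := by push_cast; ring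
      rw [this] at hstep; linarith
    have hpos : 0 < constraintPoly (m + 2) ε x y (m + 2) := by
      rw [hrec]
      have hcast : (((m + 2 : ℕ) : ℝ) - ((m : ℝ) + 1)) = 1 := by push_cast; ring
      rw [hcast]
      have h1 : (0 : ℝ) ≤ (((m : ℝ) + 2) * x) * (A - ((m : ℝ) + 1) * 2 * B) := by
        apply mul_nonneg (by positivity); linarith
      have h2 : (0 : ℝ) < (((m : ℝ) + 2) * ((m : ℝ) + 1) * x) * B := by positivity
      have h3 : (0 : ℝ) ≤ (y - ((m : ℝ) + 2) * (((m : ℝ) + 2) + 2 * ε)) * A := by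
        apply mul_nonneg (by linarith) hApos.le
      nlinarith [h1, h2, h3]
    exact hpos.ne'
end
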